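/- arXiv:1509.05258 — 3 statements merged into one kernel-verified Lean document; each statement's English description precedes it below -/
import Mathlib

section
/- Jacobi–Maupertuis principle, pregeodesic form: Let F be a real inner product space, V : F → ℝ differentiable with gradient ∇V, E ∈ ℝ, and set f := 2(E − V) (so ∇f = −2∇V). Let x : ℝ → F be a curve whose derivative x' exists everywhere and is itself differentiable, satisfying Newton's equation x''(t) = −∇V(x(t)) and the energy relation (1/2)‖x'(t)‖² + V(x(t)) = E for all t, and assume f(x(t)) > 0 for all t. Then x solves the geodesic equation of the Jacobi metric h = f·⟨·,·⟩ up to reparametrization: for every t ∈ ℝ, x''(t) + (1/(2 f(x(t)))) · ( 2⟨∇f(x(t)), x'(t)⟩ · x'(t) − ‖x'(t)‖² · ∇f(x(t)) ) = ( ⟨∇f(x(t)), x'(t)⟩ / f(x(t)) ) · x'(t). -/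
/-! Newton's law reads `x'' = ½ ∇f` and energy conservation reads `‖x'‖² = f` along the
trajectory. Substituting both, the acceleration exactly cancels the normal part
`-‖x'‖² ∇f / (2f)` of the Christoffel term, and only a multiple of the velocity survives. -/

open scoped RealInnerProductSpace

open InnerProductSpace

section Gradient

variable {F : Type*} [NormedAddCommGroup F] [InnerProductSpace ℝ F] [CompleteSpace F]

theorem gradient_const_sub (f : F → ℝ) (c : ℝ) (x : F) :
    gradient (fun y => c - f y) x = -gradient f x :=
  (toDual ℝ F).injective <| by simp only [toDual_gradient, map_neg, fderiv_const_sub]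

theorem gradient_const_mul (f : F → ℝ) (c : ℝ) (x : F) :
    gradient (fun y => c * f y) x = c • gradient f x :=
  (toDual ℝ F).injective <| by
    rw [toDual_gradient, map_smul, toDual_gradient]
    exact congrFun (fderiv_const_smul_field (f := f) c) x

end Gradient

section Conformal

variable {F : Type*} [NormedAddCommGroup F] [InnerProductSpace ℝ F]

/-- `Γ(v, v)` for the conformal metric `φ ⟨·,·⟩`, at a point where `φ = c` and `∇φ = g`. -/
noncomputable def conformalChristoffel (c : ℝ) (g v : F) : F :=
  (1 / (2 * c)) • ((2 * ⟪g, v⟫) • v - ‖v‖ ^ 2 • g)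

theorem half_smul_add_conformalChristoffel {c : ℝ} (hc : c ≠ 0) {g v : F} (hv : ‖v‖ ^ 2 = c) :
    (1 / 2 : ℝ) • g + conformalChristoffel c g v = (⟪g, v⟫ / c) • v := by
  rw [conformalChristoffel, hv, smul_sub, smul_smul, smul_smul]
  have h_tangential : 1 / (2 * c) * (2 * ⟪g, v⟫) = ⟪g, v⟫ / c := by field_simp
  have h_normal : 1 / (2 * c) * c = 1 / 2 := by field_simp
  rw [h_tangential, h_normal]
  abel

end Conformal

theorem jacobi_maupertuis_pregeodesic_general
    {F : Type*} [NormedAddCommGroup F] [InnerProductSpace ℝ F] [CompleteSpace F]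
    (V : F → ℝ) (E : ℝ)
    (f : F → ℝ) (hf : ∀ p, f p = 2 * (E - V p))
    (x x' x'' : ℝ → F)
    (hNewton : ∀ t, x'' t = -gradient V (x t))
    (hE : ∀ t, (1 / 2) * ‖x' t‖ ^ 2 + V (x t) = E)
    (hfpos : ∀ t, 0 < f (x t)) :
    ∀ t : ℝ,
      x'' t + (1 / (2 * f (x t))) •
          ((2 * ⟪gradient f (x t), x' t⟫) • x' t
            - ‖x' t‖ ^ 2 • gradient f (x t))
        = (⟪gradient f (x t), x' t⟫ / f (x t)) • x' t := by
  intro t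
  have hgrad : gradient f (x t) = (-2 : ℝ) • gradient V (x t) := by
    rw [funext hf, gradient_const_mul, gradient_const_sub, smul_neg, neg_smul]
  have hacc : x'' t = (1 / 2 : ℝ) • gradient f (x t) := by
    rw [hNewton, hgrad, smul_smul]
    norm_num
  have hspeed : ‖x' t‖ ^ 2 = f (x t) := by
    linarith [hE t, hf (x t)]
  rw [hacc]
  exact half_smul_add_conformalChristoffel (hfpos t).ne' hspeed

/-- Jacobi–Maupertuis principle, pregeodesic form: a Newtonian trajectory with
energy `E` solves the geodesic equation of the Jacobi metric `h = f⟨·,·⟩`,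
`f = 2(E - V)`, up to reparametrization. -/
theorem jacobi_maupertuis_pregeodesic
    {F : Type*} [NormedAddCommGroup F] [InnerProductSpace ℝ F] [CompleteSpace F]
    (V : F → ℝ) (hV : Differentiable ℝ V) (E : ℝ)
    (f : F → ℝ) (hf : ∀ p, f p = 2 * (E - V p))
    (x x' x'' : ℝ → F)
    (hx : ∀ t, HasDerivAt x (x' t) t)
    (hx' : ∀ t, HasDerivAt x' (x'' t) t)
    (hNewton : ∀ t, x'' t = -gradient V (x t))
    (hE : ∀ t, (1 / 2) * ‖x' t‖ ^ 2 + V (x t) = E)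
    (hfpos : ∀ t, 0 < f (x t)) :
    ∀ t : ℝ,
      x'' t + (1 / (2 * f (x t))) •
          ((2 * ⟪gradient f (x t), x' t⟫) • x' t
            - ‖x' t‖ ^ 2 • gradient f (x t))
        = (⟪gradient f (x t), x' t⟫ / f (x t)) • x' t :=
  jacobi_maupertuis_pregeodesic_general V E f hf x x' x'' hNewton hE hfpos
end

section
/- Jacobi–Maupertuis principle, arclength form: Let F be a real inner product space, V : F → ℝ differentiable with gradient ∇V, E ∈ ℝ, and set f := 2(E − V). Let x : ℝ → F be twice differentiable with x''(t) = −∇V(x(t)) and (1/2)‖x'(t)‖² + V(x(t)) = E for all t, and f(x(t)) > 0 for all t. Define σ(t) := ∫₀ᵗ f(x(u)) du, and suppose τ : ℝ → ℝ is differentiable on an open interval J with σ(τ(s)) = s for all s ∈ J. Then the reparametrized curve y := x ∘ τ is a unit-speed geodesic of the Jacobi metric on J: for all s ∈ J one has f(y(s)) · ‖y'(s)‖² = 1 and y''(s) = (1/(2 f(y(s)))) · ( ‖y'(s)‖² · ∇f(y(s)) − 2⟨∇f(y(s)), y'(s)⟩ · y'(s) ). -/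
/-!
Along a Newtonian trajectory of energy `E` the conformal factor is the kinetic energy term,
`f (x t) = ‖x' t‖²`, and `∇f = -2∇V = 2x''`. The arclength reparametrization therefore has
`τ' = ‖x' ∘ τ‖⁻²` (the identity `σ ∘ τ = id` even forces `x' ∘ τ ≠ 0`), so `y = x ∘ τ` has
velocity `y' = x'/‖x'‖²` and acceleration `y'' = x''/‖x'‖⁴ - 2⟪x'', x'⟫ x'/‖x'‖⁶`, evaluated at
`τ s`.
Both claims are then algebraic identities in `x'(τ s)` and `x''(τ s)`.
-/

open scoped RealInnerProductSpace Topology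
open Set Filter

section

variable {F : Type*} [NormedAddCommGroup F] [InnerProductSpace ℝ F]

theorem gradient_const_mul_const_sub [CompleteSpace F] (c E : ℝ) (V : F → ℝ) (p : F) :
    gradient (fun q => c * (E - V q)) p = -c • gradient V p := by
  have h : fderiv ℝ (fun q => c * (E - V q)) p = -c • fderiv ℝ V p := by
    have := congrFun (fderiv_const_smul_field (𝕜 := ℝ) c (f := fun q => E - V q)) p
    simp only [Pi.smul_def, smul_eq_mul] at this
    rw [this, fderiv_const_sub, smul_neg, neg_smul]
  simp [gradient, h]

theorem hasDerivAt_inv_of_eventually_rightInverse {σ τ : ℝ → ℝ} {σ' s : ℝ}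
    (hσ : HasDerivAt σ σ' (τ s)) (hτ : DifferentiableAt ℝ τ s)
    (h : ∀ᶠ u in 𝓝 s, σ (τ u) = u) :
    σ' ≠ 0 ∧ HasDerivAt τ σ'⁻¹ s := by
  have hone : σ' * deriv τ s = 1 :=
    (hσ.comp s hτ.hasDerivAt).unique ((hasDerivAt_id s).congr_of_eventuallyEq h)
  exact ⟨left_ne_zero_of_mul_eq_one hone, eq_inv_of_mul_eq_one_right hone ▸ hτ.hasDerivAt⟩

section ArclengthReparametrization

variable {x x' x'' : ℝ → F} {τ : ℝ → ℝ} {J : Set ℝ}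

theorem eqOn_deriv_comp_of_hasDerivAt_inv_norm_sq (hx : ∀ t, HasDerivAt x (x' t) t)
    (hτ : ∀ s ∈ J, HasDerivAt τ (‖x' (τ s)‖ ^ 2)⁻¹ s) :
    EqOn (deriv (x ∘ τ)) (fun s => (‖x' (τ s)‖ ^ 2)⁻¹ • x' (τ s)) J :=
  fun s hs => ((hx (τ s)).scomp s (hτ s hs)).deriv

theorem deriv_deriv_comp_of_hasDerivAt_inv_norm_sq (hx : ∀ t, HasDerivAt x (x' t) t)
    (hx' : ∀ t, HasDerivAt x' (x'' t) t) (hJ : IsOpen J)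
    (hτ : ∀ s ∈ J, HasDerivAt τ (‖x' (τ s)‖ ^ 2)⁻¹ s) {s : ℝ} (hs : s ∈ J)
    (hne : x' (τ s) ≠ 0) :
    deriv (deriv (x ∘ τ)) s = ((‖x' (τ s)‖ ^ 2) ^ 2)⁻¹ • x'' (τ s)
      - (2 * ⟪x'' (τ s), x' (τ s)⟫ / (‖x' (τ s)‖ ^ 2) ^ 3) • x' (τ s) := by
  have hvel_eq := eqOn_deriv_comp_of_hasDerivAt_inv_norm_sq hx hτ
  rw [(eventuallyEq_of_mem (hJ.mem_nhds hs) hvel_eq).deriv_eq]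
  have hspeed := (hx' (τ s)).norm_sq.comp s (hτ s hs)
  have hvel := (hx' (τ s)).scomp s (hτ s hs)
  have hn : ‖x' (τ s)‖ ≠ 0 := norm_ne_zero_iff.mpr hne
  refine ((hspeed.inv (pow_ne_zero 2 hn)).smul hvel).deriv.trans ?_
  simp only [Pi.inv_apply, Function.comp_apply, real_inner_comm (x' (τ s))]
  match_scalars <;> field_simp

end ArclengthReparametrization

end

theorem jacobi_maupertuis_arclength_general
    {F : Type*} [NormedAddCommGroup F] [InnerProductSpace ℝ F] [CompleteSpace F]
    (V : F → ℝ) (E : ℝ)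
    (f : F → ℝ) (hf : ∀ p, f p = 2 * (E - V p))
    (x x' x'' : ℝ → F)
    (hx : ∀ t, HasDerivAt x (x' t) t)
    (hx' : ∀ t, HasDerivAt x' (x'' t) t)
    (hNewton : ∀ t, x'' t = -gradient V (x t))
    (hE : ∀ t, (1 / 2) * ‖x' t‖ ^ 2 + V (x t) = E)
    (σ : ℝ → ℝ) (hσ : ∀ t, σ t = ∫ u in (0:ℝ)..t, f (x u))
    (a b : ℝ) (τ : ℝ → ℝ)
    (hτ : DifferentiableOn ℝ τ (Set.Ioo a b))
    (hστ : ∀ s ∈ Set.Ioo a b, σ (τ s) = s) :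
    ∀ s ∈ Set.Ioo a b,
      f ((x ∘ τ) s) * ‖deriv (x ∘ τ) s‖ ^ 2 = 1 ∧
      deriv (deriv (x ∘ τ)) s
        = (1 / (2 * f ((x ∘ τ) s))) •
            (‖deriv (x ∘ τ) s‖ ^ 2 • gradient f ((x ∘ τ) s)
              - (2 * ⟪gradient f ((x ∘ τ) s), deriv (x ∘ τ) s⟫) •
                  deriv (x ∘ τ) s) := by
  have hspeed : ∀ t, f (x t) = ‖x' t‖ ^ 2 := fun t => by rw [hf]; linarith [hE t]
  have hgrad : ∀ t, gradient f (x t) = (2 : ℝ) • x'' t := fun t => by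
    rw [funext hf, gradient_const_mul_const_sub, hNewton, smul_neg, neg_smul]
  have hσ' : ∀ t, HasDerivAt σ (‖x' t‖ ^ 2) t := fun t => by
    have hcont : Continuous fun t => ‖x' t‖ ^ 2 :=
      (continuous_iff_continuousAt.2 fun t => (hx' t).continuousAt).norm.pow 2
    rw [funext hσ]
    simp only [hspeed]
    exact (hcont.integral_hasStrictDerivAt 0 t).hasDerivAt
  have hτ' : ∀ s ∈ Set.Ioo a b, x' (τ s) ≠ 0 ∧ HasDerivAt τ (‖x' (τ s)‖ ^ 2)⁻¹ s :=
    fun s hs => by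
      have hJ := isOpen_Ioo.mem_nhds hs
      simpa using hasDerivAt_inv_of_eventually_rightInverse (hσ' (τ s))
        (hτ.differentiableAt hJ) (eventually_of_mem hJ hστ)
  intro s hs
  have hn : ‖x' (τ s)‖ ≠ 0 := norm_ne_zero_iff.mpr (hτ' s hs).1
  rw [Function.comp_apply, hspeed, hgrad,
    eqOn_deriv_comp_of_hasDerivAt_inv_norm_sq hx (fun s hs => (hτ' s hs).2) hs,
    deriv_deriv_comp_of_hasDerivAt_inv_norm_sq hx hx' isOpen_Ioo (fun s hs => (hτ' s hs).2) hs
      (hτ' s hs).1]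
  simp only [norm_smul, real_inner_smul_left, real_inner_smul_right, norm_inv, norm_pow,
    Real.norm_eq_abs, abs_norm]
  constructor
  · field_simp
  · match_scalars <;> field_simp

/-- Jacobi–Maupertuis principle, arclength form: reparametrizing a Newtonian
trajectory of energy `E` by the arclength `σ(t) = ∫₀ᵗ f(x(u)) du` of the Jacobi
metric `h = f⟨·,·⟩`, `f = 2(E - V)`, yields a unit-speed geodesic of `h`. -/
theorem jacobi_maupertuis_arclength
    {F : Type*} [NormedAddCommGroup F] [InnerProductSpace ℝ F] [CompleteSpace F]
    (V : F → ℝ) (hV : Differentiable ℝ V) (E : ℝ)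
    (f : F → ℝ) (hf : ∀ p, f p = 2 * (E - V p))
    (x x' x'' : ℝ → F)
    (hx : ∀ t, HasDerivAt x (x' t) t)
    (hx' : ∀ t, HasDerivAt x' (x'' t) t)
    (hNewton : ∀ t, x'' t = -gradient V (x t))
    (hE : ∀ t, (1 / 2) * ‖x' t‖ ^ 2 + V (x t) = E)
    (hfpos : ∀ t, 0 < f (x t))
    (σ : ℝ → ℝ) (hσ : ∀ t, σ t = ∫ u in (0:ℝ)..t, f (x u))
    (a b : ℝ) (τ : ℝ → ℝ)
    (hτ : DifferentiableOn ℝ τ (Set.Ioo a b))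
    (hστ : ∀ s ∈ Set.Ioo a b, σ (τ s) = s) :
    ∀ s ∈ Set.Ioo a b,
      f ((x ∘ τ) s) * ‖deriv (x ∘ τ) s‖ ^ 2 = 1 ∧
      deriv (deriv (x ∘ τ)) s
        = (1 / (2 * f ((x ∘ τ) s))) •
            (‖deriv (x ∘ τ) s‖ ^ 2 • gradient f ((x ∘ τ) s)
              - (2 * ⟪gradient f ((x ∘ τ) s), deriv (x ∘ τ) s⟫) •
                  deriv (x ∘ τ) s) :=
  jacobi_maupertuis_arclength_general V E f hf x x' x'' hx hx' hNewton hE σ hσ a b τ hτ hστ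
end

section
/- Non-factorization of the free field on the circle with incommensurate Dirichlet boundary (the paper's counterexample to dynamical locality): Let θ₁, θ₂ ∈ ℝ with (θ₂ − θ₁)/π irrational, and let φ : ℝ × ℝ → ℝ be twice continuously differentiable and satisfy: (i) the one-dimensional wave equation ∂²φ/∂t²(t,θ) = ∂²φ/∂θ²(t,θ) for all (t,θ) ∈ ℝ × ℝ; (ii) spatial periodicity φ(t, θ + 2π) = φ(t, θ) for all (t,θ); and (iii) the Dirichlet conditions φ(t, θ₁) = 0 and φ(t, θ₂) = 0 for all t ∈ ℝ. Then φ is identically zero. -/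
/-!
Along the characteristic directions `(1, 1)` and `(1, -1)` the mixed second derivative of a
solution of the wave equation vanishes, which gives d'Alembert's parallelogram identity
`φ(t + a + b, θ + a - b) + φ(t, θ) = φ(t + a, θ + a) + φ(t + b, θ - b)`. With `a = b = c` it turns a
Dirichlet line `θ = θ₀` into an odd reflection `φ(t, θ₀ + c) = -φ(t, θ₀ - c)`; two such reflections
compose to the translation by `2(θ₂ - θ₁)`. So `φ(t, ·)` has the periods `2π` and `2(θ₂ - θ₁)`,
which generate a dense subgroup of `ℝ`; being continuous, it is constant, equal to `φ(t, θ₁) = 0`.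
-/

open Function

theorem Continuous.eq_of_periodic_of_irrational {α : Type*} [TopologicalSpace α] [T2Space α]
    {f : ℝ → α} (hf : Continuous f) {a b : ℝ} (ha : Periodic f a) (hb : Periodic f b)
    (hab : Irrational (a / b)) (x y : ℝ) : f x = f y := by
  have hperiod : ∀ p ∈ AddSubgroup.closure {a, b}, Periodic f p := by
    intro p hp
    induction hp using AddSubgroup.closure_induction with
    | mem p hp =>
      rcases hp with rfl | rfl
      exacts [ha, hb]
    | zero => simp [Periodic]
    | add p q _ _ hp hq => exact hp.add_period hq
    | neg p _ hp => exact hp.neg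
  have hshift : (fun p => f (x + p)) = fun _ => f x :=
    Continuous.ext_on (dense_addSubgroupClosure_pair_iff.mpr hab) (by fun_prop)
      continuous_const fun p hp => hperiod p hp x
  simpa using (congrFun hshift (y - x)).symm

theorem Function.periodic_two_mul_sub_of_odd_about {G : Type*} [AddGroup G] {g : ℝ → G}
    {a b : ℝ} (ha : ∀ c, g (a + c) = -g (a - c)) (hb : ∀ c, g (b + c) = -g (b - c)) :
    Periodic g (2 * (b - a)) := by
  intro x
  calc g (x + 2 * (b - a)) = -g (b - (b - 2 * a + x)) := by rw [← hb]; congr 1; ring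
    _ = g x := by rw [show b - (b - 2 * a + x) = a + (a - x) by ring, ha, neg_neg, sub_sub_cancel]

section SecondDerivative

variable {E F : Type*} [NormedAddCommGroup E] [NormedSpace ℝ E] [NormedAddCommGroup F]
  [NormedSpace ℝ F] {f : E → F}

theorem hasDerivAt_comp_add_smul {x v : E} {s : ℝ} (hf : DifferentiableAt ℝ f (x + s • v)) :
    HasDerivAt (fun s : ℝ => f (x + s • v)) (fderiv ℝ f (x + s • v) v) s := by
  have hline : HasDerivAt (fun s : ℝ => x + s • v) v s := by
    simpa using ((hasDerivAt_id s).smul_const v).const_add x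
  exact hf.hasFDerivAt.comp_hasDerivAt s hline

theorem ContDiff.differentiable_fderiv (hf : ContDiff ℝ 2 f) : Differentiable ℝ (fderiv ℝ f) :=
  (hf.fderiv_right (m := 1) (by norm_num)).differentiable (by norm_num)

theorem hasDerivAt_fderiv_apply_comp_add_smul {x v : E} {s : ℝ}
    (hf : DifferentiableAt ℝ (fderiv ℝ f) (x + s • v)) (w : E) :
    HasDerivAt (fun s : ℝ => fderiv ℝ f (x + s • v) w)
      (fderiv ℝ (fderiv ℝ f) (x + s • v) v w) s :=
  (ContinuousLinearMap.apply ℝ F w).hasFDerivAt.comp_hasDerivAt s (hasDerivAt_comp_add_smul hf)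

theorem deriv_deriv_comp_add_smul (hf : ContDiff ℝ 2 f) (x v : E) (s : ℝ) :
    deriv (deriv fun s : ℝ => f (x + s • v)) s = fderiv ℝ (fderiv ℝ f) (x + s • v) v v := by
  have hfirst : deriv (fun s : ℝ => f (x + s • v)) = fun s => fderiv ℝ f (x + s • v) v :=
    funext fun s => (hasDerivAt_comp_add_smul (hf.differentiable (by norm_num) _)).deriv
  rw [hfirst, (hasDerivAt_fderiv_apply_comp_add_smul (hf.differentiable_fderiv _) v).deriv]

theorem IsSymmSndFDerivAt.fderiv_fderiv_add_sub {x : E} (h : IsSymmSndFDerivAt ℝ f x)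
    (v w : E) :
    fderiv ℝ (fderiv ℝ f) x (v + w) (v - w)
      = fderiv ℝ (fderiv ℝ f) x v v - fderiv ℝ (fderiv ℝ f) x w w := by
  simp only [map_add, map_sub, add_apply, h.eq w v]
  abel

theorem add_add_smul_eq_of_fderiv_fderiv_eq_zero (hf : ContDiff ℝ 2 f) {v w : E}
    (h : ∀ y, fderiv ℝ (fderiv ℝ f) y v w = 0) (x : E) (a b : ℝ) :
    f (x + a • v + b • w) + f x = f (x + a • v) + f (x + b • w) := by
  have hf₁ : Differentiable ℝ f := hf.differentiable (by norm_num)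
  have hf₂ : Differentiable ℝ (fderiv ℝ f) := hf.differentiable_fderiv
  have hconst : ∀ y a, fderiv ℝ f (y + a • v) w = fderiv ℝ f y w := fun y a => by
    simpa using is_const_of_deriv_eq_zero
      (fun s => (hasDerivAt_fderiv_apply_comp_add_smul (hf₂ _) w).differentiableAt)
      (fun s => by rw [(hasDerivAt_fderiv_apply_comp_add_smul (hf₂ _) w).deriv, h]) a 0
  have hdiff : ∀ s : ℝ, HasDerivAt (fun s : ℝ => f (x + a • v + s • w) - f (x + s • w))
      (fderiv ℝ f (x + a • v + s • w) w - fderiv ℝ f (x + s • w) w) s := fun s =>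
    (hasDerivAt_comp_add_smul (hf₁ _)).sub (hasDerivAt_comp_add_smul (hf₁ _))
  have hzero : ∀ s : ℝ, deriv (fun s : ℝ => f (x + a • v + s • w) - f (x + s • w)) s = 0 := by
    intro s
    rw [(hdiff s).deriv, add_right_comm, hconst, sub_self]
  have h := is_const_of_deriv_eq_zero (fun s => (hdiff s).differentiableAt) hzero b 0
  simp only [zero_smul, add_zero] at h
  rw [← sub_eq_sub_iff_add_eq_add, h]

end SecondDerivative

section WaveEquation

variable {F : Type*} [NormedAddCommGroup F] [NormedSpace ℝ F] {φ : ℝ × ℝ → F}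

theorem deriv_deriv_comp_left (hφ : ContDiff ℝ 2 φ) (t θ : ℝ) :
    deriv (deriv fun a : ℝ => φ (a, θ)) t = fderiv ℝ (fderiv ℝ φ) (t, θ) (1, 0) (1, 0) := by
  have hline : (fun a : ℝ => φ (a, θ)) = fun a => φ ((0, θ) + a • (1, 0)) := by
    funext a; simp
  rw [hline, deriv_deriv_comp_add_smul hφ]
  simp

theorem deriv_deriv_comp_right (hφ : ContDiff ℝ 2 φ) (t θ : ℝ) :
    deriv (deriv fun b : ℝ => φ (t, b)) θ = fderiv ℝ (fderiv ℝ φ) (t, θ) (0, 1) (0, 1) := by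
  have hline : (fun b : ℝ => φ (t, b)) = fun b => φ ((t, 0) + b • (0, 1)) := by
    funext b; simp
  rw [hline, deriv_deriv_comp_add_smul hφ]
  simp

theorem wave_parallelogram (hφ : ContDiff ℝ 2 φ)
    (hwave : ∀ t θ : ℝ,
      deriv (deriv (fun a : ℝ => φ (a, θ))) t = deriv (deriv (fun b : ℝ => φ (t, b))) θ)
    (t θ a b : ℝ) :
    φ (t + a + b, θ + a - b) + φ (t, θ) = φ (t + a, θ + a) + φ (t + b, θ - b) := by
  have hmixed : ∀ y : ℝ × ℝ, fderiv ℝ (fderiv ℝ φ) y (1, 1) (1, -1) = 0 := by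
    rintro ⟨s, ϑ⟩
    have hsymm := (hφ.contDiffAt (x := (s, ϑ))).isSymmSndFDerivAt (n := 2) (by simp)
    have := hsymm.fderiv_fderiv_add_sub (1, 0) (0, 1)
    rw [← deriv_deriv_comp_left hφ, ← deriv_deriv_comp_right hφ, hwave, sub_self] at this
    simpa using this
  have h := add_add_smul_eq_of_fderiv_fderiv_eq_zero hφ hmixed (t, θ) a b
  simp only [Prod.smul_mk, Prod.mk_add_mk, smul_eq_mul, mul_one, mul_neg] at h
  rwa [← sub_eq_add_neg, ← sub_eq_add_neg] at h

theorem wave_odd_reflection_of_eq_zero (hφ : ContDiff ℝ 2 φ)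
    (hwave : ∀ t θ : ℝ,
      deriv (deriv (fun a : ℝ => φ (a, θ))) t = deriv (deriv (fun b : ℝ => φ (t, b))) θ)
    {θ₀ : ℝ} (hb : ∀ t, φ (t, θ₀) = 0) (t c : ℝ) :
    φ (t, θ₀ + c) = -φ (t, θ₀ - c) := by
  have h := wave_parallelogram hφ hwave (t - c) θ₀ c c
  rw [sub_add_cancel, add_sub_cancel_right, hb, hb, zero_add] at h
  rw [eq_neg_iff_add_eq_zero, ← h]

end WaveEquation

/-- Non-factorization of the free scalar field on the circle with
incommensurate Dirichlet boundary: a `C²` solution of the wave equation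
`∂ₜ²φ = ∂_θ²φ`, `2π`-periodic in `θ`, vanishing on the two lines `θ = θ₁` and
`θ = θ₂` with `(θ₂ - θ₁)/π` irrational, is identically zero. -/
theorem wave_equation_incommensurate_dirichlet_rigidity
    (θ₁ θ₂ : ℝ) (hirr : Irrational ((θ₂ - θ₁) / Real.pi))
    (φ : ℝ × ℝ → ℝ)
    (hreg : ContDiff ℝ 2 φ)
    (hwave : ∀ t θ : ℝ,
      deriv (deriv (fun a : ℝ => φ (a, θ))) t
        = deriv (deriv (fun b : ℝ => φ (t, b))) θ)
    (hper : ∀ t θ : ℝ, φ (t, θ + 2 * Real.pi) = φ (t, θ))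
    (hb₁ : ∀ t : ℝ, φ (t, θ₁) = 0)
    (hb₂ : ∀ t : ℝ, φ (t, θ₂) = 0) :
    ∀ t θ : ℝ, φ (t, θ) = 0 := by
  intro t θ
  have hreflect : Periodic (fun θ => φ (t, θ)) (2 * (θ₂ - θ₁)) :=
    periodic_two_mul_sub_of_odd_about (wave_odd_reflection_of_eq_zero hreg hwave hb₁ t)
      (wave_odd_reflection_of_eq_zero hreg hwave hb₂ t)
  have hratio : Irrational (2 * (θ₂ - θ₁) / (2 * Real.pi)) := by
    rwa [mul_div_mul_left _ _ two_ne_zero]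
  have hcont : Continuous fun θ => φ (t, θ) := hreg.continuous.comp (by fun_prop)
  calc φ (t, θ) = φ (t, θ₁) :=
        hcont.eq_of_periodic_of_irrational hreflect (hper t) hratio θ θ₁
    _ = 0 := hb₁ t
end
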